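/- arXiv:2308.10386 — 5 statements merged into one kernel-verified Lean document; each statement's English description precedes it below -/
import Mathlib

section
/- Let N ≥ 1, p_i ∈ (0,1) with q_i = 1-p_i, w_i = log(p_i/q_i), and let η_1,…,η_N be independent with η_i Bernoulli(p_i) (values in {0,1}). Then P( Σ_{i=1}^N w_i(2η_i - 1) ≤ 0 ) ≤ Π_{i=1}^N 2√(p_i q_i). -/
/-!
Chernoff's bound at `t = -1/2` gives `P(S ≤ 0) ≤ 𝔼[exp(-S/2)]`, and by independence the
moment generating function of the sum factors. Each vote `wᵢ(2ηᵢ - 1)` takes the value `±wᵢ`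
with probabilities `pᵢ`, `qᵢ`, and since `exp(wᵢ/2) = √(pᵢ/qᵢ)` its factor is
`pᵢ √(qᵢ/pᵢ) + qᵢ √(pᵢ/qᵢ) = 2√(pᵢqᵢ)`.
-/

open MeasureTheory ProbabilityTheory

section ZeroOneValued

variable {Ω : Type*} [MeasurableSpace Ω] {μ : Measure Ω} {η : Ω → ℝ}

lemma comp_ae_eq_affine_of_ae_zero_or_one (hval : ∀ᵐ ω ∂μ, η ω = 0 ∨ η ω = 1) (f : ℝ → ℝ) :
    (fun ω => f (η ω)) =ᵐ[μ] fun ω => f 0 + (f 1 - f 0) * η ω := by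
  filter_upwards [hval] with ω hω
  rcases hω with h | h <;> simp [h]

lemma ae_eq_indicator_of_ae_zero_or_one (hval : ∀ᵐ ω ∂μ, η ω = 0 ∨ η ω = 1) :
    η =ᵐ[μ] {ω | η ω = 1}.indicator 1 := by
  filter_upwards [hval] with ω hω
  rcases hω with h | h <;> simp [h]

variable (hmeas : Measurable η) (hval : ∀ᵐ ω ∂μ, η ω = 0 ∨ η ω = 1)
include hmeas hval

lemma integrable_of_ae_zero_or_one [IsFiniteMeasure μ] : Integrable η μ :=
  ((integrable_const 1).indicator (measurableSet_eq_fun hmeas measurable_const)).congr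
    (ae_eq_indicator_of_ae_zero_or_one hval).symm

lemma integral_of_ae_zero_or_one : ∫ ω, η ω ∂μ = μ.real {ω | η ω = 1} := by
  rw [integral_congr_ae (ae_eq_indicator_of_ae_zero_or_one hval),
    integral_indicator_one (measurableSet_eq_fun hmeas measurable_const)]

lemma integrable_comp_of_ae_zero_or_one [IsFiniteMeasure μ] (f : ℝ → ℝ) :
    Integrable (fun ω => f (η ω)) μ :=
  ((integrable_const _).add ((integrable_of_ae_zero_or_one hmeas hval).const_mul _)).congr
    (comp_ae_eq_affine_of_ae_zero_or_one hval f).symm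

lemma integral_comp_of_ae_zero_or_one [IsProbabilityMeasure μ] (f : ℝ → ℝ) :
    ∫ ω, f (η ω) ∂μ = (1 - μ.real {ω | η ω = 1}) * f 0 + μ.real {ω | η ω = 1} * f 1 := by
  rw [integral_congr_ae (comp_ae_eq_affine_of_ae_zero_or_one hval f),
    integral_add (integrable_const _) ((integrable_of_ae_zero_or_one hmeas hval).const_mul _),
    integral_const_mul, integral_of_ae_zero_or_one hmeas hval]
  simp only [integral_const, probReal_univ, smul_eq_mul, one_mul]
  ring

end ZeroOneValued

lemma exp_half_log_div {p q : ℝ} (hp : 0 < p) (hq : 0 < q) :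
    Real.exp (Real.log (p / q) / 2) = Real.sqrt p / Real.sqrt q := by
  rw [div_eq_mul_one_div (Real.log _), ← Real.rpow_def_of_pos (div_pos hp hq),
    ← Real.sqrt_eq_rpow, Real.sqrt_div hp.le]

lemma mul_exp_half_log_div_add_eq_two_sqrt_mul {p q : ℝ} (hp : 0 < p) (hq : 0 < q) :
    q * Real.exp (Real.log (p / q) / 2) + p * Real.exp (-(Real.log (p / q) / 2)) =
      2 * Real.sqrt (p * q) := by
  rw [Real.exp_neg, exp_half_log_div hp hq, Real.sqrt_mul hp.le]
  have hsp := Real.sq_sqrt hp.le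
  have hsq := Real.sq_sqrt hq.le
  have hsp_pos := Real.sqrt_pos.2 hp
  have hsq_pos := Real.sqrt_pos.2 hq
  field_simp
  rw [hsp, hsq]
  ring

lemma mgf_neg_half_log_odds_vote {Ω : Type*} [MeasurableSpace Ω] {μ : Measure Ω}
    [IsProbabilityMeasure μ] {η : Ω → ℝ} (hmeas : Measurable η)
    (hval : ∀ᵐ ω ∂μ, η ω = 0 ∨ η ω = 1) {p : ℝ} (hp : p ∈ Set.Ioo (0 : ℝ) 1)
    (hber : μ {ω | η ω = 1} = ENNReal.ofReal p) :
    mgf (fun ω => Real.log (p / (1 - p)) * (2 * η ω - 1)) μ (-(1 / 2)) =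
      2 * Real.sqrt (p * (1 - p)) := by
  rw [mgf, integral_comp_of_ae_zero_or_one hmeas hval
      (fun x => Real.exp (-(1 / 2) * (Real.log (p / (1 - p)) * (2 * x - 1)))),
    measureReal_def, hber, ENNReal.toReal_ofReal hp.1.le,
    ← mul_exp_half_log_div_add_eq_two_sqrt_mul hp.1 (sub_pos.2 hp.2)]
  ring_nf

theorem stmt_4_general {Ω : Type*} [MeasurableSpace Ω] (μ : Measure Ω) [IsProbabilityMeasure μ]
    (N : ℕ) (p : Fin N → ℝ) (hp : ∀ i, p i ∈ Set.Ioo (0:ℝ) 1)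
    (η : Fin N → Ω → ℝ) (hmeas : ∀ i, Measurable (η i))
    (hindep : iIndepFun η μ)
    (hval : ∀ i, ∀ᵐ ω ∂μ, η i ω = 0 ∨ η i ω = 1)
    (hber : ∀ i, μ {ω | η i ω = 1} = ENNReal.ofReal (p i)) :
    (μ {ω | ∑ i, Real.log (p i / (1 - p i)) * (2 * η i ω - 1) ≤ 0}).toReal ≤
      ∏ i, 2 * Real.sqrt (p i * (1 - p i)) := by
  set vote : Fin N → ℝ → ℝ := fun i x => Real.log (p i / (1 - p i)) * (2 * x - 1)
  set X : Fin N → Ω → ℝ := fun i => vote i ∘ η i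
  have hvote : ∀ i, Measurable (vote i) := fun i => by fun_prop
  have hXmeas : ∀ i, Measurable (X i) := fun i => (hvote i).comp (hmeas i)
  have hXindep : iIndepFun X μ := hindep.comp vote hvote
  have hint : Integrable (fun ω => Real.exp (-(1 / 2) * (∑ i, X i) ω)) μ :=
    hXindep.integrable_exp_mul_sum hXmeas fun i _ =>
      integrable_comp_of_ae_zero_or_one (hmeas i) (hval i)
        fun x => Real.exp (-(1 / 2) * vote i x)
  have hevent : {ω | ∑ i, Real.log (p i / (1 - p i)) * (2 * η i ω - 1) ≤ 0} =
      {ω | (∑ i, X i) ω ≤ 0} := by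
    simp only [X, vote, Finset.sum_apply, Function.comp_apply]
  rw [hevent, ← measureReal_def]
  calc μ.real {ω | (∑ i, X i) ω ≤ 0}
      ≤ Real.exp (-(-(1 / 2)) * 0) * mgf (∑ i, X i) μ (-(1 / 2)) :=
        measure_le_le_exp_mul_mgf 0 (by norm_num) hint
    _ = ∏ i, mgf (X i) μ (-(1 / 2)) := by
        rw [mul_zero, Real.exp_zero, one_mul, hXindep.mgf_sum hXmeas]
    _ = ∏ i, 2 * Real.sqrt (p i * (1 - p i)) :=
        Finset.prod_congr rfl fun i _ =>
          mgf_neg_half_log_odds_vote (hmeas i) (hval i) (hp i) (hber i)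

/-- Sharp Chernoff-type bound for the naive Bayes rule:
`P(error) ≤ ∏ i, √(4 pᵢ qᵢ)` for independent Bernoulli correctness indicators. -/
theorem stmt_4 {Ω : Type*} [MeasurableSpace Ω] (μ : Measure Ω) [IsProbabilityMeasure μ]
    (N : ℕ) (hN : 1 ≤ N) (p : Fin N → ℝ) (hp : ∀ i, p i ∈ Set.Ioo (0:ℝ) 1)
    (η : Fin N → Ω → ℝ) (hmeas : ∀ i, Measurable (η i))
    (hindep : iIndepFun η μ)
    (hval : ∀ i, ∀ᵐ ω ∂μ, η i ω = 0 ∨ η i ω = 1)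
    (hber : ∀ i, μ {ω | η i ω = 1} = ENNReal.ofReal (p i)) :
    (μ {ω | ∑ i, Real.log (p i / (1 - p i)) * (2 * η i ω - 1) ≤ 0}).toReal ≤
      ∏ i, 2 * Real.sqrt (p i * (1 - p i)) :=
  stmt_4_general μ N p hp η hmeas hindep hval hber
end

section
/- Let p_i ∈ (0,1), q_i = 1-p_i, w_i = log(p_i/q_i), Φ = Σ_i (p_i - 1/2) w_i, and define g(t) = -tΦ + Σ_i log(p_i e^{-q_i w_i t} + q_i e^{p_i w_i t}) for t > 0. Then g'(1) = 0 and g attains its minimum over t > 0 at t = 1, with g(1) = Σ_i log(2√(p_i q_i)). -/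
/-!
Write `g(t) = -tΦ + ∑ᵢ fᵢ(t)` with `fᵢ(t) = log (uᵢ(t) + vᵢ(t))`, where
`uᵢ(t) = pᵢ e^{-qᵢwᵢt}` and `vᵢ(t) = qᵢ e^{pᵢwᵢt}`. By AM-GM,
`fᵢ(t) ≥ log 2 + (log uᵢ(t) + log vᵢ(t)) / 2 = log (2√(pᵢqᵢ)) + (pᵢ - 1/2) wᵢ t`,
and the linear terms add up to exactly `tΦ`, so `g(t) ≥ ∑ᵢ log (2√(pᵢqᵢ))` for every real `t`.
The choice `wᵢ = log (pᵢ/qᵢ)` makes `uᵢ(1) = vᵢ(1)`, so equality holds at `t = 1`.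
Hence `t = 1` is a global minimum of the differentiable function `g`, and `g'(1) = 0` by Fermat.
-/

open Real Finset

noncomputable def logOdds (p : ℝ) : ℝ := log (p / (1 - p))

lemma log_two_add_half_log_mul_le_log_add {u v : ℝ} (hu : 0 < u) (hv : 0 < v) :
    log 2 + (log u + log v) / 2 ≤ log (u + v) := by
  have hamgm : 4 * (u * v) ≤ (u + v) ^ 2 := by nlinarith [sq_nonneg (u - v)]
  have hlog := log_le_log (by positivity) hamgm
  rw [log_mul (by norm_num) (by positivity), log_mul hu.ne' hv.ne', log_pow,
    show (4 : ℝ) = 2 ^ 2 by norm_num, log_pow] at hlog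
  push_cast at hlog
  linarith

lemma log_two_mul_sqrt_mul_one_sub {p : ℝ} (hp0 : 0 < p) (hp1 : p < 1) :
    log (2 * √(p * (1 - p))) = log 2 + (log p + log (1 - p)) / 2 := by
  have hq : 0 < 1 - p := by linarith
  rw [log_mul two_ne_zero (by positivity), log_sqrt (by positivity), log_mul hp0.ne' hq.ne']

lemma log_two_mul_sqrt_add_le_log_bernoulli_mgf {p : ℝ} (hp0 : 0 < p) (hp1 : p < 1) (w t : ℝ) :
    log (2 * √(p * (1 - p))) + (p - 1/2) * w * t ≤
      log (p * exp (-(1 - p) * w * t) + (1 - p) * exp (p * w * t)) := by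
  have hq : 0 < 1 - p := by linarith
  have hamgm := log_two_add_half_log_mul_le_log_add (mul_pos hp0 (exp_pos (-(1 - p) * w * t)))
    (mul_pos hq (exp_pos (p * w * t)))
  rw [log_mul hp0.ne' (exp_pos _).ne', log_mul hq.ne' (exp_pos _).ne', log_exp, log_exp] at hamgm
  rw [log_two_mul_sqrt_mul_one_sub hp0 hp1]
  linarith

lemma log_bernoulli_mgf_logOdds_one {p : ℝ} (hp0 : 0 < p) (hp1 : p < 1) :
    log (p * exp (-(1 - p) * logOdds p * 1) + (1 - p) * exp (p * logOdds p * 1)) =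
      log (2 * √(p * (1 - p))) + (p - 1/2) * logOdds p := by
  have hq : 0 < 1 - p := by linarith
  have hw : logOdds p = log p - log (1 - p) := log_div hp0.ne' hq.ne'
  have hbalance : (1 - p) * exp (p * logOdds p * 1) = p * exp (-(1 - p) * logOdds p * 1) := by
    have hexp : ∀ {a : ℝ}, 0 < a → ∀ x, a * exp x = exp (log a + x) := fun ha x => by
      rw [exp_add, exp_log ha]
    rw [hexp hp0, hexp hq, hw]
    ring_nf
  rw [hbalance, ← two_mul, log_mul two_ne_zero (by positivity), log_mul hp0.ne' (exp_pos _).ne',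
    log_exp, log_two_mul_sqrt_mul_one_sub hp0 hp1, hw]
  ring

noncomputable def chernoffExponent {ι : Type*} [Fintype ι] (p : ι → ℝ) (t : ℝ) : ℝ :=
  -t * (∑ i, (p i - 1/2) * logOdds (p i)) +
    ∑ i, log (p i * exp (-(1 - p i) * logOdds (p i) * t) +
      (1 - p i) * exp (p i * logOdds (p i) * t))

section

variable {ι : Type*} [Fintype ι] {p : ι → ℝ}

lemma sum_log_two_mul_sqrt_le_chernoffExponent (hp : ∀ i, p i ∈ Set.Ioo (0 : ℝ) 1) (t : ℝ) :
    ∑ i, log (2 * √(p i * (1 - p i))) ≤ chernoffExponent p t := by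
  have hsum := sum_le_sum fun i (_ : i ∈ univ) =>
    log_two_mul_sqrt_add_le_log_bernoulli_mgf (hp i).1 (hp i).2 (logOdds (p i)) t
  rw [sum_add_distrib, ← sum_mul] at hsum
  unfold chernoffExponent
  linarith

lemma chernoffExponent_one (hp : ∀ i, p i ∈ Set.Ioo (0 : ℝ) 1) :
    chernoffExponent p 1 = ∑ i, log (2 * √(p i * (1 - p i))) := by
  rw [chernoffExponent, sum_congr rfl fun i _ => log_bernoulli_mgf_logOdds_one (hp i).1 (hp i).2,
    sum_add_distrib]
  ring

lemma differentiable_chernoffExponent (hp : ∀ i, p i ∈ Set.Ioo (0 : ℝ) 1) :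
    Differentiable ℝ (chernoffExponent p) := by
  intro t
  have hpos : ∀ i, 0 < p i * exp (-(1 - p i) * logOdds (p i) * t) +
      (1 - p i) * exp (p i * logOdds (p i) * t) := fun i => by
    obtain ⟨hp0, hp1⟩ := hp i
    have : 0 < 1 - p i := by linarith
    positivity
  unfold chernoffExponent
  refine (DifferentiableAt.mul (by fun_prop) (by fun_prop)).add ?_
  exact DifferentiableAt.fun_sum fun i _ => DifferentiableAt.log (by fun_prop) (hpos i).ne'

lemma isMinOn_chernoffExponent_one (hp : ∀ i, p i ∈ Set.Ioo (0 : ℝ) 1) :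
    IsMinOn (chernoffExponent p) Set.univ 1 := fun t _ =>
  (chernoffExponent_one hp).trans_le (sum_log_two_mul_sqrt_le_chernoffExponent hp t)

lemma hasDerivAt_chernoffExponent_one (hp : ∀ i, p i ∈ Set.Ioo (0 : ℝ) 1) :
    HasDerivAt (chernoffExponent p) 0 1 := by
  have hmin : IsLocalMin (chernoffExponent p) 1 :=
    (isMinOn_chernoffExponent_one hp).isLocalMin Filter.univ_mem
  simpa only [hmin.deriv_eq_zero] using (differentiable_chernoffExponent hp 1).hasDerivAt

/-- The Chernoff exponent `g(t) = -tΦ + ∑ log(pᵢ e^{-qᵢwᵢt} + qᵢ e^{pᵢwᵢt})` is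
minimized over `t > 0` at `t = 1`, where it equals `∑ log(2√(pᵢqᵢ))`. -/
theorem stmt_5 (N : ℕ) (p : Fin N → ℝ) (hp : ∀ i, p i ∈ Set.Ioo (0:ℝ) 1) :
    HasDerivAt
      (fun t : ℝ =>
        -t * (∑ i, (p i - 1/2) * Real.log (p i / (1 - p i))) +
          ∑ i, Real.log
            (p i * Real.exp (-(1 - p i) * Real.log (p i / (1 - p i)) * t) +
             (1 - p i) * Real.exp (p i * Real.log (p i / (1 - p i)) * t)))
      0 1 ∧
    (∀ t : ℝ, 0 < t →
      (-(1:ℝ) * (∑ i, (p i - 1/2) * Real.log (p i / (1 - p i))) +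
          ∑ i, Real.log
            (p i * Real.exp (-(1 - p i) * Real.log (p i / (1 - p i)) * 1) +
             (1 - p i) * Real.exp (p i * Real.log (p i / (1 - p i)) * 1))) ≤
      (-t * (∑ i, (p i - 1/2) * Real.log (p i / (1 - p i))) +
          ∑ i, Real.log
            (p i * Real.exp (-(1 - p i) * Real.log (p i / (1 - p i)) * t) +
             (1 - p i) * Real.exp (p i * Real.log (p i / (1 - p i)) * t)))) ∧
    (-(1:ℝ) * (∑ i, (p i - 1/2) * Real.log (p i / (1 - p i))) +
          ∑ i, Real.log
            (p i * Real.exp (-(1 - p i) * Real.log (p i / (1 - p i)) * 1) +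
             (1 - p i) * Real.exp (p i * Real.log (p i / (1 - p i)) * 1))) =
      ∑ i, Real.log (2 * Real.sqrt (p i * (1 - p i))) :=
  ⟨hasDerivAt_chernoffExponent_one hp,
    fun t _ => isMinOn_chernoffExponent_one hp (Set.mem_univ t),
    chernoffExponent_one hp⟩
end
end

section
/- For all ε ∈ (0, 1/2) and all x ≥ 0: log((1+2ε+x)/(1-2ε+x)) / log((1+2ε)/(1-2ε)) ≥ 1 - x · [ 4ε / ((1-4ε²) · log((1+2ε)/(1-2ε))) ]. Moreover the left-hand side is at most 1. -/
/-- Ratio between pseudo and true naive Bayes weights. -/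
theorem stmt_7 (ε x : ℝ) (hε : ε ∈ Set.Ioo (0:ℝ) (1/2)) (hx : 0 ≤ x) :
    Real.log ((1 + 2*ε + x) / (1 - 2*ε + x)) / Real.log ((1 + 2*ε) / (1 - 2*ε)) ≥
      1 - x * (4*ε / ((1 - 4*ε^2) * Real.log ((1 + 2*ε) / (1 - 2*ε)))) ∧
    Real.log ((1 + 2*ε + x) / (1 - 2*ε + x)) / Real.log ((1 + 2*ε) / (1 - 2*ε)) ≤ 1 := by
  obtain ⟨hε0, hε2⟩ := hε
  have h1 : 0 < 1 - 2*ε := by linarith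
  have h2 : 0 < 1 + 2*ε := by linarith
  have h3 : 0 < 1 - 2*ε + x := by linarith
  have h4 : 0 < 1 + 2*ε + x := by linarith
  have hsq : 0 < 1 - 4*ε^2 := by nlinarith
  have hL : 0 < Real.log ((1 + 2*ε) / (1 - 2*ε)) :=
    Real.log_pos ((one_lt_div h1).mpr (by linarith))
  set L := Real.log ((1 + 2*ε) / (1 - 2*ε)) with hLdef
  have hfL : Real.log ((1 + 2*ε + x) / (1 - 2*ε + x)) ≤ L := by
    rw [hLdef]
    apply Real.log_le_log (by positivity)
    rw [div_le_div_iff₀ h3 h1]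
    nlinarith
  have hr : 0 < (1 - 2*ε + x)*(1 + 2*ε)/((1 - 2*ε)*(1 + 2*ε + x)) := by positivity
  have hlogr := Real.log_le_sub_one_of_pos hr
  have hexp : Real.log ((1 - 2*ε + x)*(1 + 2*ε)/((1 - 2*ε)*(1 + 2*ε + x)))
      = L - Real.log ((1 + 2*ε + x) / (1 - 2*ε + x)) := by
    rw [hLdef, Real.log_div (by positivity) (by positivity),
      Real.log_mul h3.ne' h2.ne', Real.log_mul h1.ne' h4.ne',
      Real.log_div h2.ne' h1.ne', Real.log_div h4.ne' h3.ne']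
    ring
  have hrle : (1 - 2*ε + x)*(1 + 2*ε)/((1 - 2*ε)*(1 + 2*ε + x)) - 1
      ≤ 4*ε*x/(1 - 4*ε^2) := by
    rw [div_sub_one (by positivity), div_le_div_iff₀ (by positivity) hsq]
    nlinarith [mul_nonneg (mul_nonneg hε0.le hx) (mul_nonneg hx h1.le)]
  have key : L - Real.log ((1 + 2*ε + x) / (1 - 2*ε + x)) ≤ 4*ε*x/(1 - 4*ε^2) := by
    rw [← hexp]; exact hlogr.trans hrle
  constructor
  · rw [ge_iff_le]
    have heq : 1 - x * (4*ε / ((1 - 4*ε^2) * L)) = (L - 4*ε*x/(1 - 4*ε^2)) / L := by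
      field_simp
    rw [heq, div_le_div_iff_of_pos_right hL]
    linarith
  · rw [div_le_one hL]
    exact hfL
end

section
/- For all ε ∈ (0, 1/2) and ε' ∈ (0, 1/2]: | log((1+2ε)/(1-2ε)) - log((1+4εε')/(1-4εε')) | ≤ (1/(2ε') - 1) · 4ε/(1 - 4ε²). -/
/-!
With `a = 2ε`, `t = 2ε'` and `f x = log ((1 + x) / (1 - x))`, the two weights are `f a` and
`f (t a)`. One application of `log y ≤ y - 1` to `y = ((1 + a) / (1 - a)) / ((1 + b) / (1 - b))`
gives `f a - f b ≤ 2 (a - b) / ((1 - a) (1 + b))`. Applied both ways round with `b = t a ≤ a`,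
this bounds the deviation by `2 (1 - t) a / ((1 - a) (1 + t a))`, and `t (1 + a) ≤ 1 + t a`
turns the denominator into `t (1 - a²)`.
-/

namespace Real

theorem log_one_add_div_one_sub_sub_log_le {a b : ℝ} (ha₁ : -1 < a) (ha₂ : a < 1)
    (hb₁ : -1 < b) (hb₂ : b < 1) :
    log ((1 + a) / (1 - a)) - log ((1 + b) / (1 - b)) ≤ 2 * (a - b) / ((1 - a) * (1 + b)) := by
  have ha : 0 < (1 + a) / (1 - a) := div_pos (by linarith) (by linarith)
  have hb : 0 < (1 + b) / (1 - b) := div_pos (by linarith) (by linarith)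
  have hratio :
      (1 + a) / (1 - a) / ((1 + b) / (1 - b)) - 1 = 2 * (a - b) / ((1 - a) * (1 + b)) := by
    have : 1 - a ≠ 0 := by linarith
    have : 1 + b ≠ 0 := by linarith
    have : 1 - b ≠ 0 := by linarith
    field_simp
    ring
  rw [← log_div ha.ne' hb.ne', ← hratio]
  exact log_le_sub_one_of_pos (div_pos ha hb)

theorem abs_log_one_add_div_one_sub_sub_log_mul_le {a t : ℝ} (ha₀ : 0 ≤ a) (ha₁ : a < 1)
    (ht₀ : 0 < t) (ht₁ : t ≤ 1) :
    |log ((1 + a) / (1 - a)) - log ((1 + t * a) / (1 - t * a))| ≤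
      (1 / t - 1) * (2 * a / (1 - a ^ 2)) := by
  have hta : t * a ≤ a := mul_le_of_le_one_left ha₀ ht₁
  have hta₀ : 0 ≤ t * a := by positivity
  have hupper := log_one_add_div_one_sub_sub_log_le (b := t * a) (by linarith) ha₁
    (by linarith) (by linarith)
  have hlower := log_one_add_div_one_sub_sub_log_le (a := t * a) (b := a) (by linarith)
    (by linarith) (by linarith) ha₁
  have hlower_nonpos : 2 * (t * a - a) / ((1 - t * a) * (1 + a)) ≤ 0 :=
    div_nonpos_of_nonpos_of_nonneg (by linarith) (mul_nonneg (by linarith) (by linarith))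
  have hrhs : (1 / t - 1) * (2 * a / (1 - a ^ 2)) = 2 * (a - t * a) / (t * (1 - a) * (1 + a)) := by
    have : 1 - a ≠ 0 := by linarith
    have : 1 + a ≠ 0 := by linarith
    rw [show 1 - a ^ 2 = (1 - a) * (1 + a) by ring]
    field_simp
  have hdenom :
      2 * (a - t * a) / ((1 - a) * (1 + t * a)) ≤ 2 * (a - t * a) / (t * (1 - a) * (1 + a)) := by
    have : 0 < 1 - a := by linarith
    refine div_le_div_of_nonneg_left (by linarith) (by positivity) ?_
    nlinarith [mul_nonneg (sub_nonneg.2 ht₁) (sub_nonneg.2 ha₁.le)]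
  rw [abs_sub_le_iff, hrhs]
  constructor <;> linarith

end Real

/-- Deviation between the naive Bayes weight and the pseudo naive Bayes weight. -/
theorem stmt_8 (ε ε' : ℝ) (hε : ε ∈ Set.Ioo (0:ℝ) (1/2)) (hε' : ε' ∈ Set.Ioc (0:ℝ) (1/2)) :
    |Real.log ((1 + 2*ε) / (1 - 2*ε)) - Real.log ((1 + 4*ε*ε') / (1 - 4*ε*ε'))| ≤
      (1 / (2*ε') - 1) * (4*ε / (1 - 4*ε^2)) := by
  obtain ⟨hε₀, hε₁⟩ := hε
  obtain ⟨hε'₀, hε'₁⟩ := hε'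
  rw [show 4 * ε * ε' = 2 * ε' * (2 * ε) by ring, show 4 * ε = 2 * (2 * ε) by ring,
    show 4 * ε ^ 2 = (2 * ε) ^ 2 by ring]
  exact Real.abs_log_one_add_div_one_sub_sub_log_mul_le (by linarith) (by linarith)
    (by linarith) (by linarith)
end

section
/- Let γ ∈ (0, 1/2), R(γ) = 2γ(1-γ)/(1-2γ), and ε > 0. Suppose each expert's competence satisfies p_i ∈ (γ, 1-γ) and each peers' majority competence satisfies r_i ≥ 1/2 + 1/(2 + ε·R(γ)). Then Σ_{i=1}^N | log(p_i/(1-p_i)) - log(p̃_i/(1-p̃_i)) | ≤ εN/2, where p̃_i = p_i r_i + (1-p_i)(1-r_i). -/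
/-!
The log-odds map `t ↦ log (t / (1 - t))` has derivative `1 / (t (1 - t))`, which is at most
`1 / (γ (1 - γ))` on `[γ, 1 - γ]`. The pseudo competence satisfies
`p̃ - 1/2 = (2r - 1)(p - 1/2)`, so for `1/2 ≤ r ≤ 1` it stays in `[γ, 1 - γ]` and
`|p - p̃| = (1 - r)|2p - 1| ≤ (1 - r)(1 - 2γ)`. The threshold on `r` is chosen so that the mean
value theorem then bounds each term by `ε / (2 + εR(γ)) ≤ ε / 2`.
-/

open Real Set

def pseudoCompetence (p r : ℝ) : ℝ := p * r + (1 - p) * (1 - r)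

theorem hasDerivAt_log_odds {t : ℝ} (ht₀ : 0 < t) (ht₁ : t < 1) :
    HasDerivAt (fun t => log (t / (1 - t))) (1 / (t * (1 - t))) t := by
  have h1t : (1 - t) ≠ 0 := by linarith
  have hquot := (hasDerivAt_id' t).div ((hasDerivAt_id' t).const_sub 1) h1t
  refine (hquot.log (div_ne_zero ht₀.ne' h1t)).congr_deriv ?_
  simp only [Pi.div_apply]
  field_simp
  ring

theorem abs_log_odds_sub_le {γ x y : ℝ} (hγ : 0 < γ)
    (hx : x ∈ Icc γ (1 - γ)) (hy : y ∈ Icc γ (1 - γ)) :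
    |log (x / (1 - x)) - log (y / (1 - y))| ≤ 1 / (γ * (1 - γ)) * |x - y| := by
  have hγγ : 0 < γ * (1 - γ) := by nlinarith [hx.1, hx.2]
  have hderiv : ∀ t ∈ Icc γ (1 - γ),
      HasDerivWithinAt (fun t => log (t / (1 - t))) (1 / (t * (1 - t))) (Icc γ (1 - γ)) t :=
    fun t ht => (hasDerivAt_log_odds (by linarith [ht.1]) (by linarith [ht.2])).hasDerivWithinAt
  have hbound : ∀ t ∈ Icc γ (1 - γ), ‖1 / (t * (1 - t))‖ ≤ 1 / (γ * (1 - γ)) := by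
    intro t ht
    -- `t (1 - t) - γ (1 - γ) = (t - γ)(1 - γ - t)`
    have hle : γ * (1 - γ) ≤ t * (1 - t) := by nlinarith [ht.1, ht.2]
    rw [norm_of_nonneg (one_div_nonneg.2 (hγγ.trans_le hle).le)]
    exact one_div_le_one_div_of_le hγγ hle
  simpa only [norm_eq_abs] using
    (convex_Icc γ (1 - γ)).norm_image_sub_le_of_norm_hasDerivWithin_le hderiv hbound hy hx

theorem pseudoCompetence_sub_half (p r : ℝ) :
    pseudoCompetence p r - 1 / 2 = (2 * r - 1) * (p - 1 / 2) := by
  unfold pseudoCompetence; ring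

theorem pseudoCompetence_mem_Icc {γ p r : ℝ} (hp : p ∈ Icc γ (1 - γ))
    (hr₀ : 1 / 2 ≤ r) (hr₁ : r ≤ 1) : pseudoCompetence p r ∈ Icc γ (1 - γ) := by
  have h := pseudoCompetence_sub_half p r
  constructor <;> nlinarith [hp.1, hp.2]

theorem abs_sub_pseudoCompetence_le {γ p r : ℝ} (hp : p ∈ Icc γ (1 - γ)) (hr₁ : r ≤ 1) :
    |p - pseudoCompetence p r| ≤ (1 - r) * (1 - 2 * γ) := by
  have hdiff : p - pseudoCompetence p r = (1 - r) * (2 * p - 1) := by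
    unfold pseudoCompetence; ring
  rw [hdiff, abs_mul, abs_of_nonneg (sub_nonneg.2 hr₁)]
  exact mul_le_mul_of_nonneg_left (abs_le.2 ⟨by linarith [hp.1], by linarith [hp.2]⟩)
    (sub_nonneg.2 hr₁)

theorem abs_log_odds_sub_log_odds_pseudoCompetence_le {γ ε p r : ℝ}
    (hγ : γ ∈ Ioo (0 : ℝ) (1 / 2)) (hε : 0 < ε) (hp : p ∈ Ioo γ (1 - γ))
    (hr : 1 / 2 + 1 / (2 + ε * (2 * γ * (1 - γ) / (1 - 2 * γ))) ≤ r) (hr₁ : r ≤ 1) :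
    |log (p / (1 - p)) - log (pseudoCompetence p r / (1 - pseudoCompetence p r))| ≤ ε / 2 := by
  obtain ⟨hγ₀, hγ₁⟩ := hγ
  set R := 2 * γ * (1 - γ) / (1 - 2 * γ) with hR
  have h2γ : 0 < 1 - 2 * γ := by linarith
  have hγγ : 0 < γ * (1 - γ) := by nlinarith
  have hRγ : R * (1 - 2 * γ) = 2 * (γ * (1 - γ)) := by
    rw [hR]; field_simp
  have hRpos : 0 < R := div_pos (by linarith) h2γ
  have hD : 0 < 2 + ε * R := by positivity
  have hp' : p ∈ Icc γ (1 - γ) := Ioo_subset_Icc_self hp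
  have hr₀ : 1 / 2 ≤ r := by
    have : 0 < 1 / (2 + ε * R) := by positivity
    linarith
  have h1r : (1 - r) * (2 + ε * R) ≤ ε * R / 2 := by
    have h : 1 / (2 + ε * R) * (2 + ε * R) = 1 := one_div_mul_cancel hD.ne'
    nlinarith
  calc _ ≤ 1 / (γ * (1 - γ)) * |p - pseudoCompetence p r| :=
        abs_log_odds_sub_le hγ₀ hp' (pseudoCompetence_mem_Icc hp' hr₀ hr₁)
    _ ≤ 1 / (γ * (1 - γ)) * ((1 - r) * (1 - 2 * γ)) := by
        gcongr; exact abs_sub_pseudoCompetence_le hp' hr₁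
    _ ≤ ε / (2 + ε * R) := by
        rw [div_mul_eq_mul_div, one_mul, div_le_div_iff₀ hγγ hD]
        nlinarith
    _ ≤ ε / 2 :=
        div_le_div_of_nonneg_left hε.le two_pos (le_add_of_nonneg_right (by positivity))

/-- For an absolutely balanced committee with sufficiently strong
self-excluding majorities, the ℓ¹ deviation between the naive Bayes weights
and the pseudo naive Bayes weights is at most `εN/2`. -/
theorem stmt_9 (N : ℕ) (γ ε : ℝ) (hγ : γ ∈ Set.Ioo (0:ℝ) (1/2)) (hε : 0 < ε)
    (p r : Fin N → ℝ)
    (hp : ∀ i, p i ∈ Set.Ioo γ (1 - γ))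
    (hr : ∀ i, r i ≥ 1/2 + 1 / (2 + ε * (2*γ*(1-γ) / (1 - 2*γ))))
    (hr1 : ∀ i, r i ≤ 1) :
    ∑ i, |Real.log (p i / (1 - p i)) -
        Real.log ((p i * r i + (1 - p i) * (1 - r i)) /
          (1 - (p i * r i + (1 - p i) * (1 - r i))))| ≤ ε * N / 2 := by
  calc _ ≤ ∑ _i : Fin N, ε / 2 := Finset.sum_le_sum fun i _ =>
        abs_log_odds_sub_log_odds_pseudoCompetence_le hγ hε (hp i) (hr i) (hr1 i)
    _ = ε * N / 2 := by
        rw [Finset.sum_const, Finset.card_univ, Fintype.card_fin, nsmul_eq_mul]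
        ring
end
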